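/- Assume r > 0, a > 0, κ > 0 and Φ̄(t) = e^{−κ t}. Let v : ℝ → ℝ be a C² function with v(h) < 0 for all h, satisfying at every point h the ordinary differential equation (1/2)η²h²v''(h) − (η²ρ²/2)h²(v'(h))²/v(h) + (((μ−δ)σ² − (α−r)ηρ)/σ²)·h v'(h) − (a r δ h + (α−r)²/(2σ²))·v(h) + r(1 + ln a)·v(h) − r·v(h)·ln(−a r v(h)) = 0. Then V(l,h,t) := v(h)·exp(−a r l − κ t − κ/r) solves the EXPn–HJB equation. (This is the reduction to an ODE corresponding to the two dimensional subalgebra h₁₂ = ⟨e₁ + ω e₃, e₂⟩.) -/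

import Mathlib

/-- Partial derivative of `V(l,h,t)` in `l`. -/
noncomputable def pdl (V : ℝ → ℝ → ℝ → ℝ) (l h t : ℝ) : ℝ := deriv (fun x => V x h t) l
/-- Partial derivative of `V(l,h,t)` in `h`. -/
noncomputable def pdh (V : ℝ → ℝ → ℝ → ℝ) (l h t : ℝ) : ℝ := deriv (fun y => V l y t) h
/-- Partial derivative of `V(l,h,t)` in `t`. -/
noncomputable def pdt (V : ℝ → ℝ → ℝ → ℝ) (l h t : ℝ) : ℝ := deriv (fun s => V l h s) t
/-- Second partial derivative `V_{ll}`. -/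
noncomputable def pdll (V : ℝ → ℝ → ℝ → ℝ) (l h t : ℝ) : ℝ := deriv (fun x => pdl V x h t) l
/-- Second partial derivative `V_{hh}`. -/
noncomputable def pdhh (V : ℝ → ℝ → ℝ → ℝ) (l h t : ℝ) : ℝ := deriv (fun y => pdh V l y t) h
/-- Mixed partial derivative `V_{lh}`. -/
noncomputable def pdlh (V : ℝ → ℝ → ℝ → ℝ) (l h t : ℝ) : ℝ := deriv (fun y => pdl V l y t) h

/-- `V(l,h,t)` is a (C², `V_l > 0`, `V_{ll} < 0`) solution of the EXPn–HJB equation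
with survival function `Φ`. -/
def SolvesEXPn (r σ η a α μ δ ρ : ℝ) (Φ : ℝ → ℝ) (V : ℝ → ℝ → ℝ → ℝ) : Prop :=
  ContDiff ℝ 2 (fun p : ℝ × ℝ × ℝ => V p.1 p.2.1 p.2.2) ∧
  (∀ l h t : ℝ, 0 < pdl V l h t) ∧
  (∀ l h t : ℝ, pdll V l h t < 0) ∧
  (∀ l h t : ℝ,
    pdt V l h t + (1/2) * η^2 * h^2 * pdhh V l h t + (r * l + δ * h) * pdl V l h t
      + (μ - δ) * h * pdh V l h t
      - ((α - r)^2 * (pdl V l h t)^2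
          + 2 * (α - r) * η * ρ * h * pdl V l h t * pdlh V l h t
          + η^2 * ρ^2 * σ^2 * h^2 * (pdlh V l h t)^2) / (2 * σ^2 * pdll V l h t)
      + (1/a) * pdl V l h t * Real.log (pdl V l h t)
      - (1/a) * (1 + Real.log (Φ t)) * pdl V l h t
      - (Real.log a / a) * pdl V l h t = 0)

noncomputable def expAnsatz (v : ℝ → ℝ) (c κ d : ℝ) (l h t : ℝ) : ℝ :=
  v h * Real.exp (-(c * l) - κ * t - d)

section expAnsatz

variable (v : ℝ → ℝ) (c κ d : ℝ)

theorem contDiff_expAnsatz {n : WithTop ℕ∞} (hv : ContDiff ℝ n v) :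
    ContDiff ℝ n (fun p : ℝ × ℝ × ℝ => expAnsatz v c κ d p.1 p.2.1 p.2.2) :=
  (hv.comp contDiff_snd.fst).mul (Real.contDiff_exp.comp (by fun_prop))

theorem pdl_expAnsatz (l h t : ℝ) :
    pdl (expAnsatz v c κ d) l h t = -c * expAnsatz v c κ d l h t := by
  have hexp : HasDerivAt (fun x : ℝ => -(c * x) - κ * t - d) (-c) l := by
    simpa using (((hasDerivAt_id l).const_mul c).neg.sub_const (κ * t)).sub_const d
  simp only [pdl, expAnsatz]
  rw [(hexp.exp.const_mul (v h)).deriv]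
  ring

theorem pdt_expAnsatz (l h t : ℝ) :
    pdt (expAnsatz v c κ d) l h t = -κ * expAnsatz v c κ d l h t := by
  have hexp : HasDerivAt (fun s : ℝ => -(c * l) - κ * s - d) (-κ) t := by
    simpa using (((hasDerivAt_id t).const_mul κ).const_sub (-(c * l))).sub_const d
  simp only [pdt, expAnsatz]
  rw [(hexp.exp.const_mul (v h)).deriv]
  ring

theorem pdll_expAnsatz (l h t : ℝ) :
    pdll (expAnsatz v c κ d) l h t = c ^ 2 * expAnsatz v c κ d l h t := by
  simp only [pdll, pdl_expAnsatz, deriv_const_mul_field']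
  rw [← pdl, pdl_expAnsatz]
  ring

theorem pdh_expAnsatz {h : ℝ} (hv : DifferentiableAt ℝ v h) (l t : ℝ) :
    pdh (expAnsatz v c κ d) l h t = deriv v h * Real.exp (-(c * l) - κ * t - d) :=
  (hv.hasDerivAt.mul_const _).deriv

theorem pdlh_expAnsatz {h : ℝ} (hv : DifferentiableAt ℝ v h) (l t : ℝ) :
    pdlh (expAnsatz v c κ d) l h t = -c * deriv v h * Real.exp (-(c * l) - κ * t - d) := by
  simp only [pdlh, pdl_expAnsatz, deriv_const_mul_field']
  rw [← pdh, pdh_expAnsatz v c κ d hv]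
  ring

theorem pdhh_expAnsatz (hv : Differentiable ℝ v) {h : ℝ} (hv' : DifferentiableAt ℝ (deriv v) h)
    (l t : ℝ) :
    pdhh (expAnsatz v c κ d) l h t = deriv (deriv v) h * Real.exp (-(c * l) - κ * t - d) := by
  simp only [pdhh, pdh_expAnsatz v c κ d (hv _)]
  exact (hv'.hasDerivAt.mul_const _).deriv

end expAnsatz

/-- With `V_l = -ar V`, `ln V_l = ln(-arv) - arl - κt - κ/r` and `ln Φ̄ = -κt`, the terms in `l`
(`r l V_l`), in `t` and the constant `V_t = -κV` cancel against the pieces of `V_l ln V_l / a`,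
leaving `E` times the ODE for `v`. -/
theorem hjb_expAnsatz_eq_mul_ode (r σ η a α μ δ ρ κ l h t w w' w'' E L : ℝ) (hσ : σ ≠ 0)
    (ha : a ≠ 0) (hr : r ≠ 0) (hw : w ≠ 0) (hE : E ≠ 0) :
    -κ * (w * E) + (1/2) * η^2 * h^2 * (w'' * E) + (r * l + δ * h) * (-(a * r) * (w * E))
      + (μ - δ) * h * (w' * E)
      - ((α - r)^2 * (-(a * r) * (w * E))^2
          + 2 * (α - r) * η * ρ * h * (-(a * r) * (w * E)) * (-(a * r) * w' * E)
          + η^2 * ρ^2 * σ^2 * h^2 * (-(a * r) * w' * E)^2) / (2 * σ^2 * ((a * r)^2 * (w * E)))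
      + (1/a) * (-(a * r) * (w * E)) * (L + (-(a * r * l) - κ * t - κ/r))
      - (1/a) * (1 + -(κ * t)) * (-(a * r) * (w * E))
      - (Real.log a / a) * (-(a * r) * (w * E))
    = E * ((1/2) * η^2 * h^2 * w''
        - (η^2 * ρ^2 / 2) * h^2 * w'^2 / w
        + (((μ - δ) * σ^2 - (α - r) * η * ρ) / σ^2) * h * w'
        - (a * r * δ * h + (α - r)^2 / (2 * σ^2)) * w
        + r * (1 + Real.log a) * w
        - r * w * L) := by
  field_simp
  ring

theorem log_neg_mul_mul_exp {c w : ℝ} (hcw : c * w ≠ 0) (x : ℝ) :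
    Real.log (-c * (w * Real.exp x)) = Real.log (-(c * w)) + x := by
  rw [← Real.log_exp x, ← Real.log_mul (neg_ne_zero.mpr hcw) (Real.exp_ne_zero x), Real.log_exp]
  ring_nf

theorem stmt_19_general (r σ η a α μ δ ρ κ : ℝ) (hσ : 0 < σ) (ha : 0 < a) (hr : 0 < r)
    (v : ℝ → ℝ) (hvC : ContDiff ℝ 2 v) (hvneg : ∀ h : ℝ, v h < 0)
    (hv : ∀ h : ℝ,
      (1/2) * η^2 * h^2 * deriv (deriv v) h
        - (η^2 * ρ^2 / 2) * h^2 * (deriv v h)^2 / v h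
        + (((μ - δ) * σ^2 - (α - r) * η * ρ) / σ^2) * h * deriv v h
        - (a * r * δ * h + (α - r)^2 / (2 * σ^2)) * v h
        + r * (1 + Real.log a) * v h
        - r * v h * Real.log (-(a * r * v h)) = 0) :
    SolvesEXPn r σ η a α μ δ ρ (fun t => Real.exp (-(κ * t)))
      (fun l h t => v h * Real.exp (-(a * r * l) - κ * t - κ/r)) := by
  have hv1 : Differentiable ℝ v := hvC.differentiable (by norm_num)
  have hv2 : Differentiable ℝ (deriv v) := hvC.differentiable_deriv_two
  have har : 0 < a * r := mul_pos ha hr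
  change SolvesEXPn r σ η a α μ δ ρ _ (expAnsatz v (a * r) κ (κ / r))
  refine ⟨contDiff_expAnsatz v _ _ _ hvC, fun l h t => ?_, fun l h t => ?_, fun l h t => ?_⟩
  · rw [pdl_expAnsatz, expAnsatz]
    exact mul_pos_of_neg_of_neg (neg_neg_of_pos har)
      (mul_neg_of_neg_of_pos (hvneg h) (Real.exp_pos _))
  · rw [pdll_expAnsatz, expAnsatz]
    exact mul_neg_of_pos_of_neg (by positivity)
      (mul_neg_of_neg_of_pos (hvneg h) (Real.exp_pos _))
  · rw [pdt_expAnsatz, pdl_expAnsatz, pdh_expAnsatz v _ _ _ (hv1 h),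
      pdhh_expAnsatz v _ _ _ hv1 (hv2 h), pdlh_expAnsatz v _ _ _ (hv1 h), pdll_expAnsatz,
      expAnsatz, log_neg_mul_mul_exp (mul_ne_zero har.ne' (hvneg h).ne), Real.log_exp,
      hjb_expAnsatz_eq_mul_ode r σ η a α μ δ ρ κ l h t _ _ _ _ _ hσ.ne' ha.ne' hr.ne'
        (hvneg h).ne (Real.exp_ne_zero _), hv h, mul_zero]

/-- (reduction to an ODE for the two dimensional subalgebra
`h₁₂ = ⟨e₁ + ω e₃, e₂⟩`, exponential liquidation time `Φ̄(t) = e^{−κt}`,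
`r > 0`). If `v : ℝ → ℝ` is C² with `v < 0` and solves
`(1/2)η²h²v'' − (η²ρ²/2)h²(v')²/v + (((μ−δ)σ² − (α−r)ηρ)/σ²)hv'
 − (arδh + (α−r)²/(2σ²))v + r(1 + ln a)v − rv ln(−arv) = 0`,
then `V(l,h,t) = v(h)·exp(−arl − κt − κ/r)` solves the EXPn–HJB equation. -/
theorem stmt_19 (r σ η a α μ δ ρ κ : ℝ) (hσ : 0 < σ) (ha : 0 < a) (hr : 0 < r)
    (hκ : 0 < κ)
    (v : ℝ → ℝ) (hvC : ContDiff ℝ 2 v) (hvneg : ∀ h : ℝ, v h < 0)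
    (hv : ∀ h : ℝ,
      (1/2) * η^2 * h^2 * deriv (deriv v) h
        - (η^2 * ρ^2 / 2) * h^2 * (deriv v h)^2 / v h
        + (((μ - δ) * σ^2 - (α - r) * η * ρ) / σ^2) * h * deriv v h
        - (a * r * δ * h + (α - r)^2 / (2 * σ^2)) * v h
        + r * (1 + Real.log a) * v h
        - r * v h * Real.log (-(a * r * v h)) = 0) :
    SolvesEXPn r σ η a α μ δ ρ (fun t => Real.exp (-(κ * t)))
      (fun l h t => v h * Real.exp (-(a * r * l) - κ * t - κ/r)) :=
  stmt_19_general r σ η a α μ δ ρ κ hσ ha hr v hvC hvneg hv
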